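/- arXiv:2602.23502 — 2 statements merged into one kernel-verified Lean document; each statement's English description precedes it below -/
import Mathlib

section
/- Let (L, •, N) be an irreducible NIM-rep of the fusion ring GLM(Γ, δ), and let τ₀ be a map from the set of 2Γ-orbits of L to itself such that for every ℓ ∈ L and every ℓ' with N_{0̄}(ℓ, ℓ') > 0, the 2Γ-orbit of ℓ' is τ₀([ℓ]). For g ∈ Γ define the permutation π_g of the set of 2Γ-orbits by π_g(O) = τ₀(g•O) (this is the action induced by X_{ḡ}). Then π_g⁴ is the identity for every g ∈ Γ; moreover, if δ = 0̄ then already π_g² is the identity for every g ∈ Γ. -/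
open scoped BigOperators

/-- The subgroup `2Γ = {g + g : g ∈ Γ}` of an additive abelian group `Γ`. -/
def twoG (Γ : Type*) [AddCommGroup Γ] : AddSubgroup Γ :=
  (zsmulAddGroupHom 2 : Γ →+ Γ).range

/-- A NIM-rep of the fusion ring `GLM(Γ, δ)`: a finite set `L` with a `Γ`-action
together with multiplicity functions `N x : L → L → ℕ` for `x ∈ Γ/2Γ`, satisfying
the axioms coming from the fusion rules. -/
structure GLMNimRep (Γ : Type*) [AddCommGroup Γ] [Fintype Γ] (δ : Γ ⧸ twoG Γ)
    (L : Type*) [Fintype L] [AddAction Γ L] where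
  N : (Γ ⧸ twoG Γ) → L → L → ℕ
  vadd_left : ∀ (g : Γ) (x : Γ ⧸ twoG Γ) (ℓ ℓ' : L),
    N x (g +ᵥ ℓ) ℓ' = N (x + QuotientAddGroup.mk g) ℓ ℓ'
  vadd_right : ∀ (g : Γ) (x : Γ ⧸ twoG Γ) (ℓ ℓ' : L),
    N x ℓ (g +ᵥ ℓ') = N (x + QuotientAddGroup.mk g) ℓ ℓ'
  dual_symm : ∀ (x : Γ ⧸ twoG Γ) (ℓ ℓ' : L), N x ℓ ℓ' = N (x + δ) ℓ' ℓ
  fusion : ∀ (x y : Γ ⧸ twoG Γ) (ℓ ℓ' : L),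
    ∑ t : L, N y ℓ t * N x t ℓ' =
      Nat.card {s : Γ //
        (QuotientAddGroup.mk s : Γ ⧸ twoG Γ) = δ + x + y ∧ s +ᵥ ℓ = ℓ'}

/-- Irreducibility of a NIM-rep of `GLM(Γ, δ)`: the only nonempty subset closed
under the `Γ`-action and under the supports of all `N x` is the whole set. -/
def GLMNimRep.Irreducible {Γ : Type*} [AddCommGroup Γ] [Fintype Γ] {δ : Γ ⧸ twoG Γ}
    {L : Type*} [Fintype L] [AddAction Γ L] (M : GLMNimRep Γ δ L) : Prop :=
  ∀ S : Set L, S.Nonempty →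
    (∀ (g : Γ) (ℓ : L), ℓ ∈ S → g +ᵥ ℓ ∈ S) →
    (∀ (x : Γ ⧸ twoG Γ) (ℓ ℓ' : L), ℓ ∈ S → 0 < M.N x ℓ ℓ' → ℓ' ∈ S) →
    S = Set.univ

/-- `ℓ` and `ℓ'` lie in the same `Γ`-orbit. -/
def sameGOrbit (Γ : Type*) [AddCommGroup Γ] {L : Type*} [AddAction Γ L]
    (ℓ ℓ' : L) : Prop :=
  ∃ g : Γ, g +ᵥ ℓ = ℓ'

/-- `ℓ` and `ℓ'` lie in the same `2Γ`-orbit (orbit of the restricted action). -/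
def sameTwoOrbit (Γ : Type*) [AddCommGroup Γ] {L : Type*} [AddAction Γ L]
    (ℓ ℓ' : L) : Prop :=
  ∃ g ∈ twoG Γ, g +ᵥ ℓ = ℓ'

/-- The equivalence relation on `L` whose classes are the `2Γ`-orbits. -/
def twoOrbSetoid (Γ : Type*) [AddCommGroup Γ] (L : Type*) [AddAction Γ L] :
    Setoid L where
  r := sameTwoOrbit Γ
  iseqv := by
    refine ⟨fun ℓ => ⟨0, (twoG Γ).zero_mem, by simp⟩, ?_, ?_⟩
    · rintro a b ⟨g, hg, rfl⟩
      exact ⟨-g, neg_mem hg, by rw [← add_vadd]; simp⟩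
    · rintro a b c ⟨g, hg, rfl⟩ ⟨h, hh, rfl⟩
      exact ⟨h + g, add_mem hh hg, (add_vadd h g a).symm ▸ rfl⟩

/-- The set of `2Γ`-orbits of `L`. -/
abbrev TwoOrbits (Γ : Type*) [AddCommGroup Γ] (L : Type*) [AddAction Γ L] :=
  Quotient (twoOrbSetoid Γ L)

/-- The action of `g ∈ Γ` on the set of `2Γ`-orbits, `O ↦ g • O`. -/
def orbVAdd {Γ : Type*} [AddCommGroup Γ] {L : Type*} [AddAction Γ L] (g : Γ) :
    TwoOrbits Γ L → TwoOrbits Γ L :=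
  Quotient.map (fun ℓ => g +ᵥ ℓ)
    (by
      rintro a b ⟨h, hh, rfl⟩
      exact ⟨h, hh, by
        show h +ᵥ (g +ᵥ a) = g +ᵥ (h +ᵥ a)
        rw [← add_vadd, ← add_vadd, add_comm]⟩)


lemma quot_add_self {Γ : Type*} [AddCommGroup Γ] (x : Γ ⧸ twoG Γ) : x + x = 0 := by
  induction x using QuotientAddGroup.induction_on with
  | H g =>
    show ((g + g : Γ) : Γ ⧸ twoG Γ) = 0
    rw [QuotientAddGroup.eq_zero_iff]
    exact ⟨g, by simpa [zsmulAddGroupHom_apply] using (two_zsmul g)⟩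

lemma exists_supp {Γ : Type*} [AddCommGroup Γ] [Fintype Γ] {δ : Γ ⧸ twoG Γ}
    {L : Type*} [Fintype L] [AddAction Γ L] (M : GLMNimRep Γ δ L)
    (x : Γ ⧸ twoG Γ) (ℓ : L) : ∃ t, 0 < M.N x ℓ t := by
  obtain ⟨s, hs⟩ := QuotientAddGroup.mk_surjective (δ + x + x)
  have hne : Nonempty {s' : Γ //
      (QuotientAddGroup.mk s' : Γ ⧸ twoG Γ) = δ + x + x ∧ s' +ᵥ ℓ = s +ᵥ ℓ} :=
    ⟨⟨s, hs, rfl⟩⟩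
  have hpos : 0 < ∑ t : L, M.N x ℓ t * M.N x t (s +ᵥ ℓ) := by
    rw [M.fusion x x ℓ (s +ᵥ ℓ)]
    exact Nat.card_pos
  obtain ⟨t, -, ht⟩ := Finset.exists_ne_zero_of_sum_ne_zero hpos.ne'
  exact ⟨t, Nat.pos_of_ne_zero fun h => ht (by simp [h])⟩

lemma comp_supp {Γ : Type*} [AddCommGroup Γ] [Fintype Γ] {δ : Γ ⧸ twoG Γ}
    {L : Type*} [Fintype L] [AddAction Γ L] (M : GLMNimRep Γ δ L)
    {x y : Γ ⧸ twoG Γ} {ℓ t ℓ' : L} (h1 : 0 < M.N x ℓ t) (h2 : 0 < M.N y t ℓ') :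
    ∃ s : Γ, (QuotientAddGroup.mk s : Γ ⧸ twoG Γ) = δ + y + x ∧ s +ᵥ ℓ = ℓ' := by
  have hpos : 0 < ∑ u : L, M.N x ℓ u * M.N y u ℓ' :=
    Finset.sum_pos' (fun _ _ => Nat.zero_le _)
      ⟨t, Finset.mem_univ t, Nat.mul_pos h1 h2⟩
  rw [M.fusion y x ℓ ℓ'] at hpos
  have : Nonempty {s : Γ //
      (QuotientAddGroup.mk s : Γ ⧸ twoG Γ) = δ + y + x ∧ s +ᵥ ℓ = ℓ'} :=
    Nat.card_pos_iff.mp hpos |>.1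
  obtain ⟨⟨s, hs1, hs2⟩⟩ := this
  exact ⟨s, hs1, hs2⟩

lemma pi_sq {Γ : Type*} [AddCommGroup Γ] [Fintype Γ] {δ : Γ ⧸ twoG Γ}
    {L : Type*} [Fintype L] [AddAction Γ L] (M : GLMNimRep Γ δ L)
    (τ₀ : TwoOrbits Γ L → TwoOrbits Γ L)
    (hτ : ∀ ℓ ℓ' : L, 0 < M.N 0 ℓ ℓ' →
      τ₀ (Quotient.mk (twoOrbSetoid Γ L) ℓ) = Quotient.mk (twoOrbSetoid Γ L) ℓ')
    (g : Γ) (ℓ : L) :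
    ∃ s : Γ, (QuotientAddGroup.mk s : Γ ⧸ twoG Γ) = δ ∧
      τ₀ (orbVAdd g (τ₀ (orbVAdd g (Quotient.mk (twoOrbSetoid Γ L) ℓ)))) =
        Quotient.mk (twoOrbSetoid Γ L) (s +ᵥ ℓ) := by
  obtain ⟨ℓ₁, h1⟩ := exists_supp M (QuotientAddGroup.mk g) ℓ
  obtain ⟨ℓ₂, h2⟩ := exists_supp M (QuotientAddGroup.mk g) ℓ₁
  have e1 : τ₀ (orbVAdd g (Quotient.mk (twoOrbSetoid Γ L) ℓ)) =
      Quotient.mk (twoOrbSetoid Γ L) ℓ₁ := by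
    apply hτ
    rw [M.vadd_left, zero_add]; exact h1
  have e2 : τ₀ (orbVAdd g (Quotient.mk (twoOrbSetoid Γ L) ℓ₁)) =
      Quotient.mk (twoOrbSetoid Γ L) ℓ₂ := by
    apply hτ
    rw [M.vadd_left, zero_add]; exact h2
  obtain ⟨s, hs1, hs2⟩ := comp_supp M h1 h2
  rw [add_assoc, quot_add_self, add_zero] at hs1
  exact ⟨s, hs1, by rw [e1, e2, hs2]⟩

/-- for an irreducible NIM-rep of `GLM(Γ, δ)` and `τ₀` as above, the
permutation `π_g = τ₀ ∘ (g • ·)` of the set of `2Γ`-orbits (the action induced by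
`X_{ḡ}`) satisfies `π_g⁴ = id`; if moreover `δ = 0̄`, then `π_g² = id`. -/
theorem stmt12 (Γ : Type*) [AddCommGroup Γ] [Fintype Γ] (hΓ : Even (Fintype.card Γ))
    (δ : Γ ⧸ twoG Γ) (L : Type*) [Fintype L] [Nonempty L] [AddAction Γ L]
    (M : GLMNimRep Γ δ L) (hirr : M.Irreducible)
    (τ₀ : TwoOrbits Γ L → TwoOrbits Γ L)
    (hτ : ∀ ℓ ℓ' : L, 0 < M.N 0 ℓ ℓ' →
      τ₀ (Quotient.mk (twoOrbSetoid Γ L) ℓ) = Quotient.mk (twoOrbSetoid Γ L) ℓ') :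
    (∀ (g : Γ) (O : TwoOrbits Γ L),
      τ₀ (orbVAdd g (τ₀ (orbVAdd g (τ₀ (orbVAdd g (τ₀ (orbVAdd g O))))))) = O) ∧
    (δ = 0 → ∀ (g : Γ) (O : TwoOrbits Γ L), τ₀ (orbVAdd g (τ₀ (orbVAdd g O))) = O) := by
 classical
  have key : ∀ (g : Γ) (ℓ : L),
      ∃ s : Γ, (QuotientAddGroup.mk s : Γ ⧸ twoG Γ) = δ ∧
        τ₀ (orbVAdd g (τ₀ (orbVAdd g (Quotient.mk (twoOrbSetoid Γ L) ℓ)))) =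
          Quotient.mk (twoOrbSetoid Γ L) (s +ᵥ ℓ) := pi_sq M τ₀ hτ
  constructor
  · intro g O
    induction O using Quotient.inductionOn with
    | h ℓ =>
      obtain ⟨s, hs, he⟩ := key g ℓ
      obtain ⟨s', hs', he'⟩ := key g (s +ᵥ ℓ)
      rw [he, he']
      apply Quotient.sound
      refine (twoOrbSetoid Γ L).symm ⟨s' + s, ?_, add_vadd s' s ℓ⟩
      rw [← QuotientAddGroup.eq_zero_iff]
      show ((s' : Γ ⧸ twoG Γ) + (s : Γ ⧸ twoG Γ)) = 0
      rw [hs, hs', quot_add_self]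
  · intro hδ g O
    induction O using Quotient.inductionOn with
    | h ℓ =>
      obtain ⟨s, hs, he⟩ := key g ℓ
      rw [he]
      apply Quotient.sound
      refine (twoOrbSetoid Γ L).symm ⟨s, ?_, rfl⟩
      rw [hδ] at hs
      exact (QuotientAddGroup.eq_zero_iff s).mp hs
end

section
/- Let (L, •, N) be an irreducible NIM-rep of the fusion ring GLM(Γ, δ) whose Γ-action has exactly two orbits, with point stabilizers H₁ and H₂ (one for each orbit), and let H̄ᵢ be the image of Hᵢ in Γ/2Γ. Let τ₀ be a map from the set of 2Γ-orbits of L to itself such that for every ℓ ∈ L and every ℓ' with N_{0̄}(ℓ, ℓ') > 0, the 2Γ-orbit of ℓ' is τ₀([ℓ]). Then: (a) if δ ∈ H̄₁ ∩ H̄₂, then τ₀ is an involution without fixed points, i.e. τ₀(τ₀(O)) = O and τ₀(O) ≠ O for every 2Γ-orbit O; (b) if δ ∉ H̄₁ ∪ H̄₂, then every cycle of τ₀ has length exactly 4, i.e. τ₀⁴(O) = O, τ₀(O) ≠ O, and τ₀(τ₀(O)) ≠ O for every 2Γ-orbit O. -/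
open scoped BigOperators

section Aux

variable {Γ : Type*} [AddCommGroup Γ] [Fintype Γ] {δ : Γ ⧸ twoG Γ}
  {L : Type*} [Fintype L] [AddAction Γ L]

private lemma sgo_refl (ℓ : L) : sameGOrbit Γ ℓ ℓ := ⟨0, zero_vadd _ _⟩

private lemma sgo_symm {ℓ ℓ' : L} : sameGOrbit Γ ℓ ℓ' → sameGOrbit Γ ℓ' ℓ := by
  rintro ⟨g, rfl⟩
  exact ⟨-g, by rw [← add_vadd]; simp⟩

private lemma sgo_trans {a b c : L} : sameGOrbit Γ a b → sameGOrbit Γ b c →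
    sameGOrbit Γ a c := by
  rintro ⟨g, rfl⟩ ⟨h, rfl⟩
  exact ⟨h + g, add_vadd h g a⟩

/-- From a witness `s` of the fusion count, extract an intermediate point. -/
private lemma fusion_ex (M : GLMNimRep Γ δ L) (x y : Γ ⧸ twoG Γ) (ℓ ℓ' : L) (s : Γ)
    (hs : (QuotientAddGroup.mk s : Γ ⧸ twoG Γ) = δ + x + y) (hsl : s +ᵥ ℓ = ℓ') :
    ∃ t, 0 < M.N y ℓ t ∧ 0 < M.N x t ℓ' := by
  have : Nonempty {s : Γ // (QuotientAddGroup.mk s : Γ ⧸ twoG Γ) = δ + x + y ∧ s +ᵥ ℓ = ℓ'} :=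
    ⟨⟨s, hs, hsl⟩⟩
  have hpos : 0 < ∑ t : L, M.N y ℓ t * M.N x t ℓ' := by
    rw [M.fusion]; exact Nat.card_pos
  by_contra hc
  push_neg at hc
  have hz : ∑ t : L, M.N y ℓ t * M.N x t ℓ' = 0 := by
    refine Finset.sum_eq_zero fun t _ => ?_
    rcases Nat.eq_zero_or_pos (M.N y ℓ t) with h0 | h0
    · rw [h0, zero_mul]
    · have h1 : M.N x t ℓ' = 0 := by have := hc t h0; omega
      rw [h1, mul_zero]
  omega

/-- If the count of the fusion rule is positive, there is a witness `s`. -/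
private lemma fusion_wit (M : GLMNimRep Γ δ L) (x y : Γ ⧸ twoG Γ) (ℓ ℓ' t : L)
    (h1 : 0 < M.N y ℓ t) (h2 : 0 < M.N x t ℓ') :
    ∃ s : Γ, s +ᵥ ℓ = ℓ' := by
  have hpos : 0 < ∑ u : L, M.N y ℓ u * M.N x u ℓ' :=
    Finset.sum_pos' (fun u _ => Nat.zero_le _)
      ⟨t, Finset.mem_univ t, Nat.mul_pos h1 h2⟩
  rw [M.fusion] at hpos
  obtain ⟨⟨s, _, hsl⟩⟩ := (Nat.card_pos_iff.mp hpos).1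
  exact ⟨s, hsl⟩

/-- In an irreducible NIM-rep with two Γ-orbits, `N y ℓ ℓ = 0` always. -/
private lemma nodiag (M : GLMNimRep Γ δ L) (hirr : M.Irreducible) (ℓ₁ ℓ₂ : L)
    (hne : ¬ sameGOrbit Γ ℓ₁ ℓ₂) (y : Γ ⧸ twoG Γ) (ℓ : L) : M.N y ℓ ℓ = 0 := by
  by_contra hy0
  have hy : 0 < M.N y ℓ ℓ := Nat.pos_of_ne_zero hy0
  have hS : {ℓ' | sameGOrbit Γ ℓ ℓ'} = Set.univ := by
    apply hirr
    · exact ⟨ℓ, sgo_refl ℓ⟩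
    · rintro g ℓ'' ⟨h, rfl⟩
      exact ⟨g + h, add_vadd g h ℓ⟩
    · rintro x ℓ'' ℓ' ⟨g, rfl⟩ hx
      rw [M.vadd_left] at hx
      obtain ⟨s, hsl⟩ := fusion_wit M (x + QuotientAddGroup.mk g) y ℓ ℓ' ℓ hy hx
      exact ⟨s, hsl⟩
  have h1 : sameGOrbit Γ ℓ ℓ₁ := by
    have := hS ▸ (Set.mem_univ ℓ₁); exact this
  have h2 : sameGOrbit Γ ℓ ℓ₂ := by
    have := hS ▸ (Set.mem_univ ℓ₂); exact this
  exact hne (sgo_trans (sgo_symm h1) h2)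

end Aux

/-- for an irreducible NIM-rep of `GLM(Γ, δ)` with exactly two
`Γ`-orbits (stabilizers `H₁ = Stab_Γ(ℓ₁)`, `H₂ = Stab_Γ(ℓ₂)`) and `τ₀` describing
the action of `X_{0̄}` on the set of `2Γ`-orbits:
(a) if `δ ∈ H̄₁ ∩ H̄₂` then `τ₀` is a fixed-point-free involution;
(b) if `δ ∉ H̄₁ ∪ H̄₂` then every cycle of `τ₀` has length exactly `4`. -/
theorem stmt15 (Γ : Type*) [AddCommGroup Γ] [Fintype Γ] (hΓ : Even (Fintype.card Γ))
    (δ : Γ ⧸ twoG Γ) (L : Type*) [Fintype L] [Nonempty L] [AddAction Γ L]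
    (M : GLMNimRep Γ δ L) (hirr : M.Irreducible)
    (ℓ₁ ℓ₂ : L) (hne : ¬ sameGOrbit Γ ℓ₁ ℓ₂)
    (hcov : ∀ ℓ : L, sameGOrbit Γ ℓ₁ ℓ ∨ sameGOrbit Γ ℓ₂ ℓ)
    (τ₀ : TwoOrbits Γ L → TwoOrbits Γ L)
    (hτ : ∀ ℓ ℓ' : L, 0 < M.N 0 ℓ ℓ' →
      τ₀ (Quotient.mk (twoOrbSetoid Γ L) ℓ) = Quotient.mk (twoOrbSetoid Γ L) ℓ') :
    ((δ ∈ (AddAction.stabilizer Γ ℓ₁).map (QuotientAddGroup.mk' (twoG Γ)) ∧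
      δ ∈ (AddAction.stabilizer Γ ℓ₂).map (QuotientAddGroup.mk' (twoG Γ))) →
      ∀ O : TwoOrbits Γ L, τ₀ (τ₀ O) = O ∧ τ₀ O ≠ O) ∧
    ((δ ∉ (AddAction.stabilizer Γ ℓ₁).map (QuotientAddGroup.mk' (twoG Γ)) ∧
      δ ∉ (AddAction.stabilizer Γ ℓ₂).map (QuotientAddGroup.mk' (twoG Γ))) →
      ∀ O : TwoOrbits Γ L, τ₀ (τ₀ (τ₀ (τ₀ O))) = O ∧ τ₀ O ≠ O ∧ τ₀ (τ₀ O) ≠ O) := by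
  classical
  -- notation for the quotient map
  set q : L → TwoOrbits Γ L := Quotient.mk (twoOrbSetoid Γ L) with hq
  -- every orbit is hit by some positive N 0, and τ₀² is translation by any s with s̄ = δ
  have key2 : ∀ (s : Γ), (QuotientAddGroup.mk s : Γ ⧸ twoG Γ) = δ →
      ∀ ℓ : L, τ₀ (τ₀ (q ℓ)) = q (s +ᵥ ℓ) := by
    intro s hs ℓ
    obtain ⟨t, h1, h2⟩ := fusion_ex M 0 0 ℓ (s +ᵥ ℓ) s (by simpa using hs) rfl
    rw [hq, hτ ℓ t h1, hτ t (s +ᵥ ℓ) h2]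
  -- τ₀ never fixes an orbit
  have hnf : ∀ O : TwoOrbits Γ L, τ₀ O ≠ O := by
    intro O
    obtain ⟨ℓ, rfl⟩ := Quotient.exists_rep O
    obtain ⟨s₀, hs₀⟩ := QuotientAddGroup.mk_surjective δ
    obtain ⟨t, h1, _⟩ := fusion_ex M 0 0 ℓ (s₀ +ᵥ ℓ) s₀ (by simpa using hs₀) rfl
    rw [hτ ℓ t h1]
    intro heq
    obtain ⟨h, hh, hvadd⟩ : sameTwoOrbit Γ t ℓ := Quotient.eq.mp heq
    have ht : t = (-h) +ᵥ ℓ := by rw [← hvadd, ← add_vadd]; simp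
    rw [ht, M.vadd_right] at h1
    rw [nodiag M hirr ℓ₁ ℓ₂ hne _ ℓ] at h1
    exact Nat.lt_irrefl 0 h1
  obtain ⟨s₀, hs₀⟩ := QuotientAddGroup.mk_surjective δ
  constructor
  · -- part (a)
    rintro ⟨hδ₁, hδ₂⟩ O
    obtain ⟨ℓ, rfl⟩ := Quotient.exists_rep O
    refine ⟨?_, hnf _⟩
    -- find s ∈ Stab(ℓ base) with s̄ = δ, depending on which orbit ℓ is in
    have : ∃ s : Γ, (QuotientAddGroup.mk s : Γ ⧸ twoG Γ) = δ ∧ s +ᵥ ℓ = ℓ := by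
      rcases hcov ℓ with ⟨g, rfl⟩ | ⟨g, rfl⟩
      · obtain ⟨s, hsst, hsδ⟩ := AddSubgroup.mem_map.mp hδ₁
        refine ⟨s, hsδ, ?_⟩
        rw [← add_vadd, add_comm, add_vadd, AddAction.mem_stabilizer_iff.mp hsst]
      · obtain ⟨s, hsst, hsδ⟩ := AddSubgroup.mem_map.mp hδ₂
        refine ⟨s, hsδ, ?_⟩
        rw [← add_vadd, add_comm, add_vadd, AddAction.mem_stabilizer_iff.mp hsst]
    obtain ⟨s, hsδ, hsfix⟩ := this
    rw [key2 s hsδ ℓ, hsfix]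
  · -- part (b)
    rintro ⟨hδ₁, hδ₂⟩ O
    obtain ⟨ℓ, rfl⟩ := Quotient.exists_rep O
    have h2ne : τ₀ (τ₀ (q ℓ)) ≠ q ℓ := by
      rw [key2 s₀ hs₀ ℓ]
      intro heq
      obtain ⟨h, hh, hvadd⟩ : sameTwoOrbit Γ (s₀ +ᵥ ℓ) ℓ := Quotient.eq.mp heq
      rw [← add_vadd] at hvadd
      -- h + s₀ stabilizes ℓ; transfer to the base point
      have hst : ∀ (b : L) (g : Γ), ℓ = g +ᵥ b → (h + s₀) +ᵥ b = b := by
        rintro b g rfl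
        rw [← add_vadd, add_comm, add_vadd] at hvadd
        have := congrArg (fun z => (-g) +ᵥ z) hvadd
        simpa [← add_vadd] using this
      have hδmk : (QuotientAddGroup.mk (h + s₀) : Γ ⧸ twoG Γ) = δ := by
        rw [QuotientAddGroup.mk_add, (QuotientAddGroup.eq_zero_iff h).mpr hh, zero_add, hs₀]
      rcases hcov ℓ with ⟨g, hg⟩ | ⟨g, hg⟩
      · exact hδ₁ (AddSubgroup.mem_map.mpr ⟨h + s₀, hst ℓ₁ g hg.symm, hδmk⟩)
      · exact hδ₂ (AddSubgroup.mem_map.mpr ⟨h + s₀, hst ℓ₂ g hg.symm, hδmk⟩)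
    refine ⟨?_, hnf _, h2ne⟩
    rw [key2 s₀ hs₀ ℓ, key2 s₀ hs₀ (s₀ +ᵥ ℓ), ← add_vadd]
    refine (Quotient.sound ?_).symm
    exact ⟨s₀ + s₀, ⟨s₀, two_zsmul s₀⟩, rfl⟩
end
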